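/- Assume the standing setup. If there exists a holomorphic family of Riemann maps g_t for (U_t,c_t), then the motion φ_t is trivial: there is a holomorphic motion Φ_t of the closure U₀ ∪ ∂U₀ over 𝔻 such that Φ_t = φ_t on ∂U₀ and, for every t ∈ 𝔻, the restriction of Φ_t to U₀ is a holomorphic bijection onto U_t with Φ_t(c₀) = c_t. -/

import Mathlib

open Complex MeasureTheory Set Metric Filter Topology Bornology
open scoped Classical

noncomputable section

/-- The open unit disk `𝔻` in `ℂ`. -/
def unitDisk : Set ℂ := Metric.ball 0 1

/-- The unit circle `𝕋` in `ℂ`. -/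
def unitCircleSet : Set ℂ := Metric.sphere 0 1

/-- The exterior disk `Δ = {z : |z| > 1}`. -/
def extDisk : Set ℂ := {z : ℂ | 1 < ‖z‖}

/-- The normalized Lebesgue (Haar) probability measure `m` on the unit circle,
viewed as a measure on `ℂ` via the parametrization `x ↦ exp(2πix)` of `[0,1)`. -/
def circleMeasure : Measure ℂ :=
  Measure.map (fun x : ℝ => Complex.exp (2 * Real.pi * Complex.I * x))
    (MeasureTheory.volume.restrict (Set.Ioc (0:ℝ) 1))

/-- A pointed disk `(U,c)`: a nonempty bounded open simply connected subset of `ℂ`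
with a marked point `c ∈ U`. -/
def IsPointedDisk (U : Set ℂ) (c : ℂ) : Prop :=
  U.Nonempty ∧ Bornology.IsBounded U ∧ IsOpen U ∧ SimplyConnectedSpace U ∧ c ∈ U

/-- A Riemann map for the pointed disk `(U,c)`: a holomorphic bijection `𝔻 → U`
sending `0` to `c`. -/
def IsRiemannMap (U : Set ℂ) (c : ℂ) (g : ℂ → ℂ) : Prop :=
  DifferentiableOn ℂ g unitDisk ∧ Set.BijOn g unitDisk U ∧ g 0 = c

/-- The radial limit of `g` at the angle `a` exists and equals `p`
(limit as `r → 1⁻` of `g(ra)`). -/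
def RadialLimitAt (g : ℂ → ℂ) (a p : ℂ) : Prop :=
  Filter.Tendsto (fun r : ℝ => g ((r : ℂ) * a)) (nhdsWithin 1 (Set.Iio 1)) (nhds p)

/-- The exterior radial limit of `g` at the angle `a` exists and equals `p`
(limit as `r → 1⁺` of `g(ra)`). -/
def ExtRadialLimitAt (g : ℂ → ℂ) (a p : ℂ) : Prop :=
  Filter.Tendsto (fun r : ℝ => g ((r : ℂ) * a)) (nhdsWithin 1 (Set.Ioi 1)) (nhds p)

/-- The set `g⁻¹(p)` of landing angles of `g` whose radial limit is `p`. -/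
def anglesLandingAt (g : ℂ → ℂ) (p : ℂ) : Set ℂ :=
  {a ∈ unitCircleSet | RadialLimitAt g a p}

/-- `p` is uniaccessible: exactly one angle lands at `p`. -/
def Uniaccessible (g : ℂ → ℂ) (p : ℂ) : Prop :=
  ∃ a, anglesLandingAt g p = {a}

/-- `p` is biaccessible: exactly two angles land at `p`. -/
def Biaccessible (g : ℂ → ℂ) (p : ℂ) : Prop :=
  ∃ a b, a ≠ b ∧ anglesLandingAt g p = {a, b}

/-- `φ : ∂U → ∂V` is conformally fit relative to the centers `c, c'`. -/
def ConformallyFit (U : Set ℂ) (c : ℂ) (V : Set ℂ) (c' : ℂ) (φ : ℂ → ℂ) : Prop :=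
  ∃ g g', IsRiemannMap U c g ∧ IsRiemannMap V c' g' ∧
    ∀ a ∈ unitCircleSet, ∀ p, RadialLimitAt g a p → RadialLimitAt g' a (φ p)

/-- `φ` restricts to a homeomorphism from `S` onto `T`. -/
def IsHomeoOn (φ : ℂ → ℂ) (S T : Set ℂ) : Prop :=
  ContinuousOn φ S ∧ Set.BijOn φ S T ∧
    ∃ ψ : ℂ → ℂ, ContinuousOn ψ T ∧ Set.InvOn ψ φ S T

/-- `ρ` is the intrinsic rotation of `(U,c)` by angle `θ`. -/
def IsIntrinsicRotation (U : Set ℂ) (c : ℂ) (θ : ℝ) (ρ : ℂ → ℂ) : Prop :=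
  ∃ g, IsRiemannMap U c g ∧
    ∀ z ∈ unitDisk, ρ (g z) = g (Complex.exp (2 * Real.pi * Complex.I * θ) * z)

/-- `σ` is an orientation-preserving homeomorphism of the unit circle: it is a
homeomorphism of `𝕋` having a continuous strictly increasing lift `τ` with
`τ(x+1) = τ(x)+1`. -/
def IsOrientationPreservingCircleHomeo (σ : ℂ → ℂ) : Prop :=
  IsHomeoOn σ unitCircleSet unitCircleSet ∧
  ∃ τ : ℝ → ℝ, Continuous τ ∧ StrictMono τ ∧ (∀ x, τ (x + 1) = τ x + 1) ∧
    ∀ x : ℝ, σ (Complex.exp (2 * Real.pi * Complex.I * x)) =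
      Complex.exp (2 * Real.pi * Complex.I * τ x)

/-- The closed counterclockwise arc of the unit circle from `a` to `b`
does not contain `1`. -/
def ArcAvoidsOne (a b : ℂ) : Prop :=
  ∃ x y : ℝ, 0 < x ∧ x ≤ y ∧ y < 1 ∧
    a = Complex.exp (2 * Real.pi * Complex.I * x) ∧
    b = Complex.exp (2 * Real.pi * Complex.I * y)

/-- The set `A¹` of angles landing at uniaccessible points. -/
def uniAngles (g : ℂ → ℂ) : Set ℂ :=
  {a ∈ unitCircleSet | ∃ p, RadialLimitAt g a p ∧ Uniaccessible g p}

/-- The set `A²⁻` of minus-labeled angles landing at biaccessible points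
(relative to the marked angle `1`). -/
def minusAngles (g : ℂ → ℂ) : Set ℂ :=
  {a | ∃ p b, a ≠ b ∧ anglesLandingAt g p = {a, b} ∧ ArcAvoidsOne a b}

/-- The set `A²⁺` of plus-labeled angles landing at biaccessible points
(relative to the marked angle `1`). -/
def plusAngles (g : ℂ → ℂ) : Set ℂ :=
  {b | ∃ p a, a ≠ b ∧ anglesLandingAt g p = {a, b} ∧ ArcAvoidsOne a b}

/-- The measure `α` associated to `(U,c,s,g)`. -/
def alphaMeasure (g : ℂ → ℂ) (X : Set ℂ) : ENNReal :=
  circleMeasure {a ∈ uniAngles g | ∃ p ∈ X, RadialLimitAt g a p}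

/-- The measure `β⁻` associated to `(U,c,s,g)`. -/
def betaMinusMeasure (g : ℂ → ℂ) (X : Set ℂ) : ENNReal :=
  circleMeasure {a ∈ minusAngles g | ∃ p ∈ X, RadialLimitAt g a p}

/-- The measure `β⁺` associated to `(U,c,s,g)`. -/
def betaPlusMeasure (g : ℂ → ℂ) (X : Set ℂ) : ENNReal :=
  circleMeasure {a ∈ plusAngles g | ∃ p ∈ X, RadialLimitAt g a p}

/-- The harmonic measure of a pointed disk, computed from a Riemann map `g`:
`ω(X) = m {a ∈ 𝕋 : g(a) exists and g(a) ∈ X}`. -/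
def harmonicMeasureVia (g : ℂ → ℂ) (X : Set ℂ) : ENNReal :=
  circleMeasure {a ∈ unitCircleSet | ∃ p ∈ X, RadialLimitAt g a p}

/-- An exterior Riemann map for the unbounded domain `U`: an injective holomorphic
map on `Δ` with image `U` and `|g(z)| → ∞` as `|z| → ∞`. -/
def IsExtRiemannMap (U : Set ℂ) (g : ℂ → ℂ) : Prop :=
  DifferentiableOn ℂ g extDisk ∧ Set.InjOn g extDisk ∧ g '' extDisk = U ∧
    Filter.Tendsto (fun z => ‖g z‖) (Filter.comap (fun z : ℂ => ‖z‖) Filter.atTop)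
      Filter.atTop

/-- The set of exterior landing angles of `g` with radial limit `p`. -/
def extAnglesLandingAt (g : ℂ → ℂ) (p : ℂ) : Set ℂ :=
  {a ∈ unitCircleSet | ExtRadialLimitAt g a p}

/-- `p` is uniaccessible for the exterior map `g`. -/
def ExtUniaccessible (g : ℂ → ℂ) (p : ℂ) : Prop :=
  ∃ a, extAnglesLandingAt g p = {a}

/-- `p` is biaccessible for the exterior map `g`. -/
def ExtBiaccessible (g : ℂ → ℂ) (p : ℂ) : Prop :=
  ∃ a b, a ≠ b ∧ extAnglesLandingAt g p = {a, b}

/-- The Zhukovskii map `Z(ζ) = ζ + 1/ζ`. -/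
def zhukovskii (z : ℂ) : ℂ := z + z⁻¹

/-- The exterior ray `γ_g(a) = {g(ra) : r > 1}`. -/
def extRay (g : ℂ → ℂ) (a : ℂ) : Set ℂ :=
  {w | ∃ r : ℝ, 1 < r ∧ w = g ((r : ℂ) * a)}

/-- A family of maps `f_t : U_t → ℂ` depends holomorphically on `t ∈ 𝔻`. -/
def DependsHolomorphicallyOn (U : ℂ → Set ℂ) (f : ℂ → ℂ → ℂ) : Prop :=
  ∀ t₀ ∈ unitDisk, ∀ z₀ ∈ U t₀, ∃ N : Set ℂ, N ⊆ unitDisk ∧ IsOpen N ∧ t₀ ∈ N ∧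
    (∀ t ∈ N, z₀ ∈ U t) ∧ DifferentiableOn ℂ (fun t => f t z₀) N

/-- A holomorphic motion of `X` over `𝔻`. -/
def IsHolomorphicMotion (X : Set ℂ) (φ : ℂ → ℂ → ℂ) : Prop :=
  (∀ t ∈ unitDisk, Set.InjOn (φ t) X) ∧
  (∀ z ∈ X, DifferentiableOn ℂ (fun t => φ t z) unitDisk) ∧
  ∀ z ∈ X, φ 0 z = z

/-- The standing setup: a family of pointed disks `(U_t, c_t)` over `𝔻` with
holomorphically varying centers, whose boundaries undergo the holomorphic motion
`φ_t`. -/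
def StandingSetup (U : ℂ → Set ℂ) (c : ℂ → ℂ) (φ : ℂ → ℂ → ℂ) : Prop :=
  (∀ t ∈ unitDisk, IsPointedDisk (U t) (c t)) ∧
  DifferentiableOn ℂ c unitDisk ∧
  IsHolomorphicMotion (frontier (U 0)) φ ∧
  ∀ t ∈ unitDisk, φ t '' frontier (U 0) = frontier (U t)

/-- A holomorphic family of Riemann maps for the family `(U_t, c_t)`. -/
def IsHolomorphicFamilyOfRiemannMaps (U : ℂ → Set ℂ) (c : ℂ → ℂ) (g : ℂ → ℂ → ℂ) : Prop :=
  (∀ t ∈ unitDisk, IsRiemannMap (U t) (c t) (g t)) ∧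
  ∀ z ∈ unitDisk, DifferentiableOn ℂ (fun t => g t z) unitDisk

/-- The motion `φ_t` is trivial: it extends to a holomorphic motion of the closure
of `U₀` which restricts to a biholomorphism `U₀ → U_t` sending `c₀` to `c_t`. -/
def IsTrivialMotion (U : ℂ → Set ℂ) (c : ℂ → ℂ) (φ : ℂ → ℂ → ℂ) : Prop :=
  ∃ Φ : ℂ → ℂ → ℂ, IsHolomorphicMotion (closure (U 0)) Φ ∧
    (∀ t ∈ unitDisk, ∀ z ∈ frontier (U 0), Φ t z = φ t z) ∧
    ∀ t ∈ unitDisk,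
      DifferentiableOn ℂ (Φ t) (U 0) ∧ Set.BijOn (Φ t) (U 0) (U t) ∧ Φ t (c 0) = c t

/-- The conformal radius `rad(U,c) = |g'(0)|` for a Riemann map `g` of `(U,c)`. -/
def conformalRadius (U : Set ℂ) (c : ℂ) : ℝ :=
  if h : ∃ g, IsRiemannMap U c g then ‖deriv h.choose 0‖ else 0

/-- A function on the unit disk is harmonic: locally the real part of a
holomorphic function. -/
def HarmonicOnDisk (u : ℂ → ℝ) : Prop :=
  ∀ t₀ ∈ unitDisk, ∃ N : Set ℂ, N ⊆ unitDisk ∧ IsOpen N ∧ t₀ ∈ N ∧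
    ∃ F : ℂ → ℂ, DifferentiableOn ℂ F N ∧ ∀ t ∈ N, (F t).re = u t


/-! A holomorphic family of Riemann maps `g_t` transports `U₀` onto `U_t` by `g_t ∘ g₀⁻¹`;
the points of `U₀` then move holomorphically and injectively, and gluing this motion of `U₀`
with `φ_t` on `∂U₀` gives the required motion of the closure, which is injective because
`g_t ∘ g₀⁻¹` lands in the open set `U_t` while `φ_t` lands in its frontier.

The only analytic input is that the inverse of an injective holomorphic map is holomorphic.
It is continuous by the open mapping theorem; it is holomorphic by the inverse function theorem
away from the critical points, which are isolated, and across them by Riemann's removable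
singularity theorem. -/

open Function

theorem Set.InjOn.not_eventually_eq {X Y : Type*} [TopologicalSpace X] {f : X → Y} {s : Set X}
    {w : X} [(𝓝[≠] w).NeBot] (hinj : InjOn f s) (hs : s ∈ 𝓝 w) :
    ¬∀ᶠ z in 𝓝 w, f z = f w := by
  intro hconst
  obtain ⟨z, ⟨hfz, hzs⟩, hzw⟩ :=
    (((hconst.and hs).filter_mono nhdsWithin_le_nhds).and
      (self_mem_nhdsWithin (s := {w}ᶜ))).exists
  exact hzw (hinj hzs (mem_of_mem_nhds hs) hfz)

section InverseOfInjectiveHolomorphic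

variable {f h : ℂ → ℂ} {s u : Set ℂ}

theorem AnalyticOnNhd.nhds_le_map_nhds_of_injOn (hf : AnalyticOnNhd ℂ f s) (hs : IsOpen s)
    (hinj : InjOn f s) {w : ℂ} (hw : w ∈ s) : 𝓝 (f w) ≤ map f (𝓝 w) :=
  (hf w hw).eventually_constant_or_nhds_le_map_nhds.resolve_left
    (hinj.not_eventually_eq (hs.mem_nhds hw))

theorem AnalyticOnNhd.eventually_deriv_ne_zero_of_injOn (hf : AnalyticOnNhd ℂ f s)
    (hs : IsOpen s) (hinj : InjOn f s) {w : ℂ} (hw : w ∈ s) :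
    ∀ᶠ z in 𝓝[≠] w, deriv f z ≠ 0 := by
  refine (hf.deriv w hw).eventually_eq_zero_or_eventually_ne_zero.resolve_left fun hzero => ?_
  obtain ⟨r, hr, hball⟩ := Metric.eventually_nhds_iff_ball.1 (hzero.and (hs.eventually_mem hw))
  refine hinj.not_eventually_eq (hs.mem_nhds hw) ?_
  filter_upwards [Metric.ball_mem_nhds w hr] with z hz
  exact isOpen_ball.is_const_of_deriv_eq_zero (convex_ball w r).isPreconnected
    (hf.differentiableOn.mono fun x hx => (hball x hx).2) (fun x hx => (hball x hx).1) hz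
    (mem_ball_self hr)

theorem AnalyticOnNhd.continuousOn_of_rightInvOn (hf : AnalyticOnNhd ℂ f s) (hs : IsOpen s)
    (hinj : InjOn f s) (hu : IsOpen u) (hmaps : MapsTo h u s) (hinv : RightInvOn h f u) :
    ContinuousOn h u := by
  intro z hz
  refine ContinuousAt.continuousWithinAt (tendsto_def.2 fun W hW => ?_)
  have himage : f '' (W ∩ s) ∈ 𝓝 z := by
    simpa only [hinv hz] using hf.nhds_le_map_nhds_of_injOn hs hinj (hmaps hz)
      (image_mem_map (inter_mem hW (hs.mem_nhds (hmaps hz))))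
  filter_upwards [himage, hu.mem_nhds hz] with y ⟨w, ⟨hwW, hws⟩, hfw⟩ hyu
  rwa [mem_preimage, hinj (hmaps hyu) hws ((hinv hyu).trans hfw.symm)]

theorem differentiableOn_of_rightInvOn (hf : DifferentiableOn ℂ f s)
    (hs : IsOpen s) (hinj : InjOn f s) (hu : IsOpen u) (hmaps : MapsTo h u s)
    (hinv : RightInvOn h f u) : DifferentiableOn ℂ h u := by
  have hfa : AnalyticOnNhd ℂ f s := hf.analyticOnNhd hs
  have hcont : ∀ z ∈ u, ContinuousAt h z := fun z hz =>
    (hfa.continuousOn_of_rightInvOn hs hinj hu hmaps hinv).continuousAt (hu.mem_nhds hz)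
  have hdiff : ∀ z ∈ u, deriv f (h z) ≠ 0 → DifferentiableAt ℂ h z := fun z hz hz' =>
    ((hfa (h z) (hmaps hz)).hasStrictDerivAt.of_local_left_inverse (hcont z hz) hz'
      ((hu.eventually_mem hz).mono fun y hy => hinv hy)).hasDerivAt.differentiableAt
  intro z₀ hz₀
  have hpunctured : Tendsto h (𝓝[≠] z₀) (𝓝[≠] (h z₀)) := by
    refine tendsto_nhdsWithin_of_tendsto_nhds_of_eventually_within _
      ((hcont z₀ hz₀).mono_left nhdsWithin_le_nhds) ?_
    filter_upwards [nhdsWithin_le_nhds (hu.mem_nhds hz₀), self_mem_nhdsWithin] with z hz hzz₀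
    exact fun heq => hzz₀ ((hinv hz).symm.trans ((congrArg f heq).trans (hinv hz₀)))
  refine (Complex.analyticAt_of_differentiable_on_punctured_nhds_of_continuousAt ?_
    (hcont z₀ hz₀)).differentiableAt.differentiableWithinAt
  filter_upwards [hpunctured.eventually (hfa.eventually_deriv_ne_zero_of_injOn hs hinj
    (hmaps hz₀)), nhdsWithin_le_nhds (hu.mem_nhds hz₀)] with z hz hzu
  exact hdiff z hzu hz

end InverseOfInjectiveHolomorphic

theorem IsHolomorphicMotion.piecewise {A B : Set ℂ} {Ψ φ : ℂ → ℂ → ℂ}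
    (hΨ : IsHolomorphicMotion A Ψ) (hφ : IsHolomorphicMotion B φ) (hAB : Disjoint A B)
    (himage : ∀ t ∈ unitDisk, Disjoint (Ψ t '' A) (φ t '' B)) :
    IsHolomorphicMotion (A ∪ B) fun t => A.piecewise (Ψ t) (φ t) := by
  have hBA : ∀ z ∈ B, z ∉ A := fun z hz hzA => disjoint_left.1 hAB hzA hz
  refine ⟨fun t ht => (injOn_union hAB).2 ⟨?_, ?_, ?_⟩, ?_, ?_⟩
  · exact (hΨ.1 t ht).congr (piecewise_eqOn _ _ _).symm
  · exact (hφ.1 t ht).congr fun z hz => (piecewise_eq_of_notMem _ _ _ (hBA z hz)).symm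
  · intro x hx y hy
    dsimp only
    rw [piecewise_eq_of_mem _ _ _ hx, piecewise_eq_of_notMem _ _ _ (hBA y hy)]
    exact disjoint_iff_forall_ne.1 (himage t ht) (mem_image_of_mem _ hx) (mem_image_of_mem _ hy)
  · rintro z (hz | hz)
    · simpa [Set.piecewise, hz] using hΨ.2.1 z hz
    · simpa [Set.piecewise, hBA z hz] using hφ.2.1 z hz
  · rintro z (hz | hz)
    · simpa [Set.piecewise, hz] using hΨ.2.2 z hz
    · simpa [Set.piecewise, hBA z hz] using hφ.2.2 z hz

theorem zero_mem_unitDisk : (0 : ℂ) ∈ unitDisk := mem_ball_self one_pos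

def riemannMotion (g : ℂ → ℂ → ℂ) (t : ℂ) : ℂ → ℂ :=
  g t ∘ invFunOn (g 0) unitDisk

namespace IsHolomorphicFamilyOfRiemannMaps

variable {U : ℂ → Set ℂ} {c : ℂ → ℂ} {g : ℂ → ℂ → ℂ}

theorem bijOn_invFunOn (hg : IsHolomorphicFamilyOfRiemannMaps U c g) :
    BijOn (invFunOn (g 0) unitDisk) (U 0) unitDisk :=
  have hbij := (hg.1 0 zero_mem_unitDisk).2.1
  hbij.symm hbij.invOn_invFunOn.symm

theorem bijOn_riemannMotion (hg : IsHolomorphicFamilyOfRiemannMaps U c g) {t : ℂ}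
    (ht : t ∈ unitDisk) : BijOn (riemannMotion g t) (U 0) (U t) :=
  (hg.1 t ht).2.1.comp hg.bijOn_invFunOn

theorem isHolomorphicMotion_riemannMotion (hg : IsHolomorphicFamilyOfRiemannMaps U c g) :
    IsHolomorphicMotion (U 0) (riemannMotion g) :=
  ⟨fun _ ht => (hg.bijOn_riemannMotion ht).injOn,
    fun _ hz => hg.2 _ (hg.bijOn_invFunOn.mapsTo hz),
    fun _ hz => ((hg.1 0 zero_mem_unitDisk).2.1.invOn_invFunOn).2 hz⟩

theorem differentiableOn_riemannMotion (hg : IsHolomorphicFamilyOfRiemannMaps U c g)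
    (hU : IsOpen (U 0)) {t : ℂ} (ht : t ∈ unitDisk) :
    DifferentiableOn ℂ (riemannMotion g t) (U 0) :=
  have hg₀ := hg.1 0 zero_mem_unitDisk
  (hg.1 t ht).1.comp
    (differentiableOn_of_rightInvOn hg₀.1 isOpen_ball hg₀.2.1.injOn hU
      hg.bijOn_invFunOn.mapsTo hg₀.2.1.invOn_invFunOn.2)
    hg.bijOn_invFunOn.mapsTo

theorem riemannMotion_apply_center (hg : IsHolomorphicFamilyOfRiemannMaps U c g) {t : ℂ}
    (ht : t ∈ unitDisk) : riemannMotion g t (c 0) = c t := by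
  obtain ⟨-, hbij, hcenter⟩ := hg.1 0 zero_mem_unitDisk
  have hinv : invFunOn (g 0) unitDisk (c 0) = 0 := by
    rw [← hcenter]; exact hbij.invOn_invFunOn.1 zero_mem_unitDisk
  rw [riemannMotion, comp_apply, hinv, (hg.1 t ht).2.2]

end IsHolomorphicFamilyOfRiemannMaps

/-- Existence of a holomorphic family of Riemann maps implies the
motion is trivial. -/
theorem trivialMotion_of_holomorphicFamily
    (U : ℂ → Set ℂ) (c : ℂ → ℂ) (φ : ℂ → ℂ → ℂ)
    (hsetup : StandingSetup U c φ)
    (g : ℂ → ℂ → ℂ) (hg : IsHolomorphicFamilyOfRiemannMaps U c g) :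
    IsTrivialMotion U c φ := by
  obtain ⟨hpointed, -, hφ, hφ_frontier⟩ := hsetup
  have hU₀ : IsOpen (U 0) := (hpointed 0 zero_mem_unitDisk).2.2.1
  have hU₀_frontier : Disjoint (U 0) (frontier (U 0)) :=
    (disjoint_frontier_iff_isOpen.2 hU₀).symm
  have himage : ∀ t ∈ unitDisk,
      Disjoint (riemannMotion g t '' U 0) (φ t '' frontier (U 0)) := fun t ht => by
    rw [(hg.bijOn_riemannMotion ht).image_eq, hφ_frontier t ht]
    exact (disjoint_frontier_iff_isOpen.2 (hpointed t ht).2.2.1).symm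
  refine ⟨fun t => (U 0).piecewise (riemannMotion g t) (φ t), ?_,
    fun t _ z hz => piecewise_eq_of_notMem _ _ _ (disjoint_right.1 hU₀_frontier hz),
    fun t ht => ⟨?_, ?_, ?_⟩⟩
  · rw [closure_eq_self_union_frontier]
    exact hg.isHolomorphicMotion_riemannMotion.piecewise hφ hU₀_frontier himage
  · exact (hg.differentiableOn_riemannMotion hU₀ ht).congr (piecewise_eqOn _ _ _)
  · exact (hg.bijOn_riemannMotion ht).congr (piecewise_eqOn _ _ _).symm
  · dsimp only
    rw [piecewise_eq_of_mem _ _ _ (hpointed 0 zero_mem_unitDisk).2.2.2.2]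
    exact hg.riemannMotion_apply_center ht

end
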